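/- arXiv:2511.04332 — 4 statements merged into one kernel-verified Lean document; each statement's English description precedes it below -/
import Mathlib

section
/- The Gaussian mechanism with ℓ₂-sensitivity Δ and noise scale σ satisfies (α, αΔ²/(2σ²))-Rényi differential privacy for every α > 1. -/
/-!
Both output distributions are products of one-dimensional Gaussians with common variance
`v = σ²`. For product measures the Radon–Nikodym derivative is the product of the coordinate
derivatives, so the Rényi integral factorises and the divergence is the sum of the coordinate
divergences. In one dimension, `(p_μ / p_ν) ^ α * p_ν` is `exp (α (α - 1) (μ - ν)² / (2 v))`
times the Gaussian density centred at `α μ + (1 - α) ν`, so the divergence is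
`α (μ - ν)² / (2 v)`. Summing over coordinates gives `α ‖f x - f x'‖² / (2 σ²)`, and the
sensitivity bound finishes the proof.
-/

open MeasureTheory ProbabilityTheory
open scoped NNReal ENNReal

/-- Rényi divergence of order `α`. -/
noncomputable def renyiDiv {Ω : Type*} [MeasurableSpace Ω] (α : ℝ) (P Q : Measure Ω) : ℝ :=
  (α - 1)⁻¹ * Real.log (∫ t, ((∂P/∂Q) t).toReal ^ α ∂Q)

/-- The Gaussian mechanism: output `f(X) + Z` with `Z ∼ N(0, σ² I_k)`, i.e. the product of
`k` independent Gaussians centered at the coordinates of `f(X)` with variance `σ²`. -/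
noncomputable def gaussianMechanism {X : Type*} (k : ℕ) (f : X → Fin k → ℝ) (σ : ℝ≥0)
    (x : X) : Measure (Fin k → ℝ) :=
  Measure.pi fun i => gaussianReal (f x i) (σ ^ 2)

section Product

variable {ι : Type*} [Fintype ι] {Ω : ι → Type*} [∀ i, MeasurableSpace (Ω i)]

theorem lintegral_fintype_prod_eq_prod (μ : ∀ i, Measure (Ω i)) [∀ i, IsProbabilityMeasure (μ i)]
    {f : ∀ i, Ω i → ℝ≥0∞} (hf : ∀ i, Measurable (f i)) :
    ∫⁻ x, ∏ i, f i (x i) ∂Measure.pi μ = ∏ i, ∫⁻ y, f i y ∂μ i := by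
  rw [lintegral_prod_eq_prod_lintegral_of_indepFun _ _
    (iIndepFun_pi fun i => (hf i).aemeasurable) fun i => (hf i).comp (measurable_pi_apply i)]
  exact Finset.prod_congr rfl fun i _ => (measurePreserving_eval μ i).lintegral_comp (hf i)

theorem pi_withDensity (μ : ∀ i, Measure (Ω i)) [∀ i, IsProbabilityMeasure (μ i)]
    {f : ∀ i, Ω i → ℝ≥0∞} (hf : ∀ i, Measurable (f i))
    [∀ i, SigmaFinite ((μ i).withDensity (f i))] :
    Measure.pi (fun i => (μ i).withDensity (f i)) =
      (Measure.pi μ).withDensity fun x => ∏ i, f i (x i) := by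
  refine Measure.pi_eq fun s hs => ?_
  have indicator_prod : (Set.univ.pi s).indicator (fun x => ∏ i, f i (x i)) =
      fun x => ∏ i, (s i).indicator (f i) (x i) := by
    classical
    ext x
    simp only [Set.indicator_apply, Set.mem_univ_pi, Finset.prod_ite_zero, Finset.mem_univ,
      true_implies]
  rw [withDensity_apply _ (.univ_pi hs), ← lintegral_indicator (.univ_pi hs), indicator_prod,
    lintegral_fintype_prod_eq_prod μ fun i => (hf i).indicator (hs i)]
  exact Finset.prod_congr rfl fun i _ => by
    rw [withDensity_apply _ (hs i), lintegral_indicator (hs i)]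

theorem rnDeriv_pi_ae_eq {P Q : ∀ i, Measure (Ω i)} [∀ i, IsProbabilityMeasure (P i)]
    [∀ i, IsProbabilityMeasure (Q i)] (hPQ : ∀ i, P i ≪ Q i) :
    ∂(Measure.pi P)/∂(Measure.pi Q) =ᵐ[Measure.pi Q] fun x => ∏ i, (∂(P i)/∂(Q i)) (x i) := by
  have hP : Measure.pi P = (Measure.pi Q).withDensity fun x => ∏ i, (∂(P i)/∂(Q i)) (x i) := by
    conv_lhs => rw [← funext fun i => Measure.withDensity_rnDeriv_eq (P i) (Q i) (hPQ i)]
    exact pi_withDensity Q fun i => Measure.measurable_rnDeriv _ _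
  rw [hP]
  exact Measure.rnDeriv_withDensity _ <|
    Finset.measurable_prod _ fun i _ => (Measure.measurable_rnDeriv _ _).comp (measurable_pi_apply i)

theorem integral_rnDeriv_pi_rpow {P Q : ∀ i, Measure (Ω i)} [∀ i, IsProbabilityMeasure (P i)]
    [∀ i, IsProbabilityMeasure (Q i)] (hPQ : ∀ i, P i ≪ Q i) (α : ℝ) :
    ∫ x, ((∂(Measure.pi P)/∂(Measure.pi Q)) x).toReal ^ α ∂Measure.pi Q =
      ∏ i, ∫ y, ((∂(P i)/∂(Q i)) y).toReal ^ α ∂Q i := by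
  rw [← integral_fintype_prod_eq_prod]
  refine integral_congr_ae ?_
  filter_upwards [rnDeriv_pi_ae_eq hPQ] with x hx
  rw [hx, ENNReal.toReal_prod, Real.finsetProd_rpow _ _ fun i _ => ENNReal.toReal_nonneg]

theorem renyiDiv_pi {P Q : ∀ i, Measure (Ω i)} [∀ i, IsProbabilityMeasure (P i)]
    [∀ i, IsProbabilityMeasure (Q i)] (hPQ : ∀ i, P i ≪ Q i) (α : ℝ)
    (hne : ∀ i, ∫ y, ((∂(P i)/∂(Q i)) y).toReal ^ α ∂Q i ≠ 0) :
    renyiDiv α (Measure.pi P) (Measure.pi Q) = ∑ i, renyiDiv α (P i) (Q i) := by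
  simp only [renyiDiv, integral_rnDeriv_pi_rpow hPQ, Real.log_prod fun i _ => hne i,
    Finset.mul_sum]

end Product

section Gaussian

open Real

variable {v : ℝ≥0}

theorem gaussianPDFReal_div_rpow_mul (μ ν : ℝ) (hv : v ≠ 0) (α y : ℝ) :
    (gaussianPDFReal μ v y / gaussianPDFReal ν v y) ^ α * gaussianPDFReal ν v y =
      exp (α * (α - 1) * (μ - ν) ^ 2 / (2 * v)) *
        gaussianPDFReal (α * μ + (1 - α) * ν) v y := by
  have hv' : (0 : ℝ) < v := by positivity
  simp only [gaussianPDFReal]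
  rw [mul_div_mul_left _ _ (by positivity), ← exp_sub, rpow_def_of_pos (exp_pos _), log_exp,
    mul_left_comm, ← exp_add, mul_left_comm, ← exp_add]
  congr 2
  field_simp
  ring

theorem integral_rnDeriv_gaussianReal_rpow (μ ν : ℝ) (hv : v ≠ 0) (α : ℝ) :
    ∫ y, ((∂(gaussianReal μ v)/∂(gaussianReal ν v)) y).toReal ^ α ∂gaussianReal ν v =
      exp (α * (α - 1) * (μ - ν) ^ 2 / (2 * v)) := by
  have hrn : ∂(gaussianReal μ v)/∂(gaussianReal ν v) =ᵐ[gaussianReal ν v]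
      fun y => gaussianPDF μ v y / gaussianPDF ν v y := by
    filter_upwards [Measure.rnDeriv_eq_div (gaussianReal_absolutelyContinuous μ hv)
        (gaussianReal_absolutelyContinuous ν hv),
      gaussianReal_absolutelyContinuous ν hv (rnDeriv_gaussianReal μ v),
      gaussianReal_absolutelyContinuous ν hv (rnDeriv_gaussianReal ν v)] with y h hμ hν
    rw [h, hμ, hν]
  calc ∫ y, ((∂(gaussianReal μ v)/∂(gaussianReal ν v)) y).toReal ^ α ∂gaussianReal ν v
      = ∫ y, (gaussianPDFReal μ v y / gaussianPDFReal ν v y) ^ α ∂gaussianReal ν v :=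
        integral_congr_ae <| by
          filter_upwards [hrn] with y hy
          rw [hy, ENNReal.toReal_div, toReal_gaussianPDF, toReal_gaussianPDF]
    _ = ∫ y, exp (α * (α - 1) * (μ - ν) ^ 2 / (2 * v)) *
          gaussianPDFReal (α * μ + (1 - α) * ν) v y := by
        rw [integral_gaussianReal_eq_integral_smul hv]
        simp_rw [smul_eq_mul, mul_comm (gaussianPDFReal ν v _),
          gaussianPDFReal_div_rpow_mul μ ν hv]
    _ = exp (α * (α - 1) * (μ - ν) ^ 2 / (2 * v)) := by
        rw [integral_const_mul, integral_gaussianPDFReal_eq_one _ hv, mul_one]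

theorem renyiDiv_gaussianReal (μ ν : ℝ) (hv : v ≠ 0) {α : ℝ} (hα : α ≠ 1) :
    renyiDiv α (gaussianReal μ v) (gaussianReal ν v) = α * (μ - ν) ^ 2 / (2 * v) := by
  rw [renyiDiv, integral_rnDeriv_gaussianReal_rpow μ ν hv, log_exp]
  field_simp [sub_ne_zero.mpr hα]

end Gaussian

theorem gaussianMechanism_rdp_general {X : Type*} (Nbr : X → X → Prop) (k : ℕ)
    (f : X → Fin k → ℝ) (Δ : ℝ) (σ : ℝ≥0) (hσ : 0 < σ)
    (hsens : ∀ x x', Nbr x x' → Real.sqrt (∑ i, (f x i - f x' i) ^ 2) ≤ Δ)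
    (α : ℝ) (hα : 1 < α) :
    ∀ x x', Nbr x x' →
      renyiDiv α (gaussianMechanism k f σ x) (gaussianMechanism k f σ x') ≤
        α * Δ ^ 2 / (2 * (σ : ℝ) ^ 2) := by
  intro x x' hxx'
  have hv : σ ^ 2 ≠ 0 := pow_ne_zero 2 hσ.ne'
  have hsq : ∑ i, (f x i - f x' i) ^ 2 ≤ Δ ^ 2 := (Real.sqrt_le_iff.mp (hsens x x' hxx')).2
  have hac (i : Fin k) : gaussianReal (f x i) (σ ^ 2) ≪ gaussianReal (f x' i) (σ ^ 2) :=
    (gaussianReal_absolutelyContinuous _ hv).trans (gaussianReal_absolutelyContinuous' _ hv)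
  rw [gaussianMechanism, gaussianMechanism, renyiDiv_pi hac α fun i => by
    rw [integral_rnDeriv_gaussianReal_rpow _ _ hv]; exact (Real.exp_pos _).ne']
  simp_rw [renyiDiv_gaussianReal _ _ hv hα.ne', ← Finset.sum_div, ← Finset.mul_sum]
  push_cast
  gcongr

/-- The Gaussian mechanism with ℓ₂-sensitivity `Δ` and noise scale `σ` satisfies
`(α, α Δ² / (2 σ²))`-RDP for every `α > 1`. -/
theorem gaussianMechanism_rdp {X : Type*} (Nbr : X → X → Prop) (k : ℕ)
    (f : X → Fin k → ℝ) (Δ : ℝ) (σ : ℝ≥0) (hσ : 0 < σ) (hΔ : 0 ≤ Δ)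
    (hsens : ∀ x x', Nbr x x' → Real.sqrt (∑ i, (f x i - f x' i) ^ 2) ≤ Δ)
    (α : ℝ) (hα : 1 < α) :
    ∀ x x', Nbr x x' →
      renyiDiv α (gaussianMechanism k f σ x) (gaussianMechanism k f σ x') ≤
        α * Δ ^ 2 / (2 * (σ : ℝ) ^ 2) :=
  gaussianMechanism_rdp_general Nbr k f Δ σ hσ hsens α hα
end

section
/- Gumbel-max trick: for scores s₁,…,s_k ∈ ℝ and independent Gumbel(β) random variables G₁,…,G_k, the probability that index i maximizes sᵢ + Gᵢ equals exp(sᵢ/β) / Σⱼ exp(sⱼ/β). -/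
open MeasureTheory
open scoped NNReal ENNReal

/-- The Gumbel distribution with scale `β`, with density
`(1/β) exp(-x/β - exp(-x/β))` w.r.t. Lebesgue measure (CDF `exp(-exp(-x/β))`). -/
noncomputable def gumbel (β : ℝ) : Measure ℝ :=
  volume.withDensity fun x =>
    ENNReal.ofReal ((1 / β) * Real.exp (-x / β - Real.exp (-x / β)))

open Real Set Filter Topology in
lemma gm_integral_exp_neg_mul_Ioi {c : ℝ} (hc : 0 < c) (b : ℝ) :
    ∫ u in Ioi b, Real.exp (-(c * u)) = Real.exp (-(c * b)) / c := by
  have hderiv : ∀ x ∈ Ici b, HasDerivAt (fun u => -Real.exp (-(c * u)) / c)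
      (Real.exp (-(c * x))) x := by
    intro x _
    have h1 : HasDerivAt (fun u : ℝ => -(c * u)) (-c) x := by
      simpa [Pi.neg_def] using ((hasDerivAt_id x).const_mul c).neg
    have h2 := (((Real.hasDerivAt_exp (-(c * x))).comp x h1).neg).div_const c
    have h2' : HasDerivAt (fun u => -Real.exp (-(c * u)) / c)
        (-(Real.exp (-(c * x)) * -c) / c) x := h2
    convert h2' using 1
    field_simp
  have hint : IntegrableOn (fun x => Real.exp (-(c * x))) (Ioi b) := by
    simpa [neg_mul] using exp_neg_integrableOn_Ioi b hc
  have htend : Tendsto (fun u => -Real.exp (-(c * u)) / c) atTop (𝓝 0) := by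
    have h0 : Tendsto (fun u : ℝ => -(c * u)) atTop atBot := by
      have : Tendsto (fun u : ℝ => c * u) atTop atTop := tendsto_id.const_mul_atTop hc
      exact tendsto_neg_atBot_iff.2 this
    have := (Real.tendsto_exp_atBot.comp h0).neg.div_const c
    simpa [Function.comp] using this
  have := integral_Ioi_of_hasDerivAt_of_tendsto' hderiv hint htend
  rw [this]; ring

open Real Set in
lemma gm_image_univ {β : ℝ} (hβ : 0 < β) :
    (fun x : ℝ => Real.exp (-x / β)) '' univ = Ioi 0 := by
  ext u
  simp only [image_univ, mem_range, mem_Ioi]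
  constructor
  · rintro ⟨x, rfl⟩; exact exp_pos _
  · intro hu
    refine ⟨-(β * Real.log u), ?_⟩
    rw [neg_neg, mul_div_cancel_left₀ (Real.log u) hβ.ne', Real.exp_log hu]

open Real Set in
lemma gm_image_Iio {β : ℝ} (hβ : 0 < β) (a : ℝ) :
    (fun x : ℝ => Real.exp (-x / β)) '' Iio a = Ioi (Real.exp (-a / β)) := by
  ext u
  simp only [mem_image, mem_Iio, mem_Ioi]
  constructor
  · rintro ⟨x, hx, rfl⟩
    refine Real.exp_lt_exp.2 ?_
    exact (div_lt_div_iff_of_pos_right hβ).2 (by linarith)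
  · intro hu
    have hu0 : 0 < u := (exp_pos _).trans hu
    refine ⟨-(β * Real.log u), ?_, ?_⟩
    · have hlog : -a / β < Real.log u := by
        have := Real.log_lt_log (exp_pos _) hu
        rwa [Real.log_exp] at this
      have h2 := mul_lt_mul_of_pos_left hlog hβ
      have h3 : β * (-a / β) = -a := by
        rw [mul_comm]; exact div_mul_cancel₀ (-a) hβ.ne'
      rw [h3] at h2
      linarith
    · rw [neg_neg, mul_comm, mul_div_assoc, div_self hβ.ne', mul_one, Real.exp_log hu0]

open Real Set in
lemma gm_core {β c : ℝ} (hβ : 0 < β) (hc : 0 < c) {s t : Set ℝ} (hs : MeasurableSet s)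
    (himg : (fun x : ℝ => Real.exp (-x / β)) '' s = t)
    (hti : IntegrableOn (fun u => Real.exp (-(c * u))) t) :
    ∫⁻ x in s, ENNReal.ofReal ((1 / β) * Real.exp (-x / β - c * Real.exp (-x / β))) =
      ENNReal.ofReal (∫ u in t, Real.exp (-(c * u))) := by
  subst himg
  set g : ℝ → ℝ := fun x => Real.exp (-x / β) with hg
  have hg' : ∀ x ∈ s, HasDerivWithinAt g (Real.exp (-x / β) * (-(1 / β))) s x := by
    intro x _
    have h1 : HasDerivAt (fun x : ℝ => -x / β) (-(1 / β)) x := by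
      simpa [neg_div] using ((hasDerivAt_id x).neg.div_const β)
    exact ((Real.hasDerivAt_exp _).comp x h1).hasDerivWithinAt
  have hinj : InjOn g s := by
    have hanti : StrictAnti g := fun x y hxy =>
      Real.exp_lt_exp.2 ((div_lt_div_iff_of_pos_right hβ).2 (by linarith))
    exact hanti.injective.injOn
  have hpt : ∀ x : ℝ, |Real.exp (-x / β) * (-(1 / β))| • Real.exp (-(c * g x))
      = (1 / β) * Real.exp (-x / β - c * Real.exp (-x / β)) := by
    intro x
    rw [smul_eq_mul, abs_mul, abs_neg, abs_of_pos (exp_pos _),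
      abs_of_pos (by positivity : (0:ℝ) < 1 / β),
      show (-x / β - c * Real.exp (-x / β)) = (-x / β) + (-(c * Real.exp (-x / β))) by ring,
      Real.exp_add]
    ring
  have h1 := integral_image_eq_integral_abs_deriv_smul hs hg' hinj
    (fun u => Real.exp (-(c * u)))
  have h2 : IntegrableOn (fun x => |Real.exp (-x / β) * (-(1 / β))| • Real.exp (-(c * g x))) s :=
    (integrableOn_image_iff_integrableOn_abs_deriv_smul hs hg' hinj
      (fun u => Real.exp (-(c * u)))).1 hti
  rw [h1, ofReal_integral_eq_lintegral_ofReal h2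
    (Filter.Eventually.of_forall fun x => by positivity)]
  exact lintegral_congr fun x => by rw [hpt x]

open Real Set in
lemma gm_exp_integrableOn_Ioi {c : ℝ} (hc : 0 < c) (b : ℝ) :
    IntegrableOn (fun u => Real.exp (-(c * u))) (Ioi b) := by
  simpa [neg_mul] using exp_neg_integrableOn_Ioi b hc

open Real Set in
lemma gm_density_eq (β c : ℝ) (x : ℝ) :
    -x / β - Real.exp (-x / β) = -x / β - 1 * Real.exp (-x / β) := by ring

open Real Set in
lemma gumbel_Iio {β : ℝ} (hβ : 0 < β) (a : ℝ) :
    gumbel β (Iio a) = ENNReal.ofReal (Real.exp (-Real.exp (-a / β))) := by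
  rw [gumbel, withDensity_apply _ measurableSet_Iio]
  simp_rw [gm_density_eq β 1]
  rw [gm_core hβ one_pos measurableSet_Iio (gm_image_Iio hβ a)
    (gm_exp_integrableOn_Ioi one_pos _),
    gm_integral_exp_neg_mul_Ioi one_pos]
  norm_num

open Real Set in
lemma gumbel_univ {β : ℝ} (hβ : 0 < β) : gumbel β Set.univ = 1 := by
  rw [gumbel, withDensity_apply _ MeasurableSet.univ, Measure.restrict_univ]
  have : ∫⁻ x, ENNReal.ofReal ((1 / β) * Real.exp (-x / β - Real.exp (-x / β))) =
      ∫⁻ x in Set.univ, ENNReal.ofReal ((1 / β) * Real.exp (-x / β - 1 * Real.exp (-x / β))) := by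
    rw [Measure.restrict_univ]
    exact lintegral_congr fun x => by rw [← gm_density_eq β 1 x]
  rw [this, gm_core hβ one_pos MeasurableSet.univ (gm_image_univ hβ)
    (gm_exp_integrableOn_Ioi one_pos _),
    gm_integral_exp_neg_mul_Ioi one_pos]
  norm_num

open Real Set in
/-- Gumbel-max trick: for scores `s₁, …, s_k` and independent `Gumbel(β)` noises
`G₁, …, G_k`, the probability that index `i` maximizes `sⱼ + Gⱼ` equals
`exp(sᵢ/β) / ∑ⱼ exp(sⱼ/β)`, i.e. the argmax follows the softmax distribution. -/
theorem gumbel_max_trick (k : ℕ) (s : Fin k → ℝ) (β : ℝ) (hβ : 0 < β) (i : Fin k) :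
    (Measure.pi fun _ : Fin k => gumbel β)
        {g | ∀ j : Fin k, j ≠ i → s j + g j < s i + g i} =
      ENNReal.ofReal (Real.exp (s i / β) / ∑ j, Real.exp (s j / β)) := by
  obtain _ | n := k
  · exact i.elim0
  haveI hprob : IsProbabilityMeasure (gumbel β) := ⟨gumbel_univ hβ⟩
  set c' : ℝ := ∑ j : Fin n, Real.exp ((s (i.succAbove j) - s i) / β) with hc'
  set C : ℝ := 1 + c' with hCdef
  have hc'0 : 0 ≤ c' := Finset.sum_nonneg fun j _ => (exp_pos _).le
  have hC0 : 0 < C := by rw [hCdef]; linarith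
  set T : Set (ℝ × (Fin n → ℝ)) :=
    {p | ∀ j : Fin n, s (i.succAbove j) + p.2 j < s i + p.1} with hT
  have hTm : MeasurableSet T := by
    have : T = ⋂ j : Fin n,
        {p : ℝ × (Fin n → ℝ) | s (i.succAbove j) + p.2 j < s i + p.1} := by
      ext p; simp [hT, Set.mem_iInter]
    rw [this]
    refine MeasurableSet.iInter fun j => measurableSet_lt ?_ ?_
    · exact measurable_const.add ((measurable_pi_apply j).comp measurable_snd)
    · exact measurable_const.add measurable_fst
  have hMP := measurePreserving_piFinSuccAbove (fun _ : Fin (n + 1) => gumbel β) i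
  have hset : {g : Fin (n + 1) → ℝ | ∀ j, j ≠ i → s j + g j < s i + g i} =
      (MeasurableEquiv.piFinSuccAbove (fun _ : Fin (n + 1) => ℝ) i) ⁻¹' T := by
    ext g
    simp only [Set.mem_setOf_eq, Set.mem_preimage, MeasurableEquiv.piFinSuccAbove_apply, hT]
    constructor
    · intro h j
      exact h _ (Fin.succAbove_ne i j) |>.trans_le (by simp [Fin.removeNth])
    · intro h j hj
      obtain ⟨j', rfl⟩ := Fin.exists_succAbove_eq hj
      have := h j'
      simpa [Fin.removeNth] using this
  rw [hset, hMP.measure_preimage_equiv, Measure.prod_apply hTm]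
  have hslice : ∀ t : ℝ, (Prod.mk t ⁻¹' T) =
      Set.univ.pi (fun j : Fin n => Set.Iio (s i + t - s (i.succAbove j))) := by
    intro t
    ext h
    simp only [hT, Set.mem_preimage, Set.mem_setOf_eq, Set.mem_pi, Set.mem_univ,
      forall_true_left, Set.mem_Iio, true_implies]
    exact forall_congr' fun j => by constructor <;> intro <;> linarith
  have hinner : ∀ t : ℝ, (Measure.pi fun _ : Fin n => gumbel β) (Prod.mk t ⁻¹' T) =
      ENNReal.ofReal (Real.exp (-(Real.exp (-t / β) * c'))) := by
    intro t
    rw [hslice t, Measure.pi_pi]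
    simp_rw [gumbel_Iio hβ]
    rw [← ENNReal.ofReal_prod_of_nonneg fun j _ => (exp_pos _).le]
    congr 1
    rw [← Real.exp_sum]
    congr 1
    rw [hc', Finset.mul_sum, ← Finset.sum_neg_distrib]
    refine Finset.sum_congr rfl fun j _ => ?_
    rw [← Real.exp_add]
    congr 1
    field_simp
    ring
  simp_rw [hinner]
  have hdm : Measurable fun x : ℝ =>
      ENNReal.ofReal ((1 / β) * Real.exp (-x / β - Real.exp (-x / β))) := by fun_prop
  have hfm : Measurable fun t : ℝ =>
      ENNReal.ofReal (Real.exp (-(Real.exp (-t / β) * c'))) := by fun_prop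
  rw [gumbel, lintegral_withDensity_eq_lintegral_mul volume hdm hfm]
  have hcomb : ∀ t : ℝ,
      (ENNReal.ofReal ((1 / β) * Real.exp (-t / β - Real.exp (-t / β))) *
        ENNReal.ofReal (Real.exp (-(Real.exp (-t / β) * c')))) =
      ENNReal.ofReal ((1 / β) * Real.exp (-t / β - C * Real.exp (-t / β))) := by
    intro t
    rw [← ENNReal.ofReal_mul (by positivity), mul_assoc, ← Real.exp_add]
    congr 2
    rw [hCdef]; ring
  calc ∫⁻ t, (fun x => ENNReal.ofReal ((1 / β) * Real.exp (-x / β - Real.exp (-x / β)))) t *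
        (fun t => ENNReal.ofReal (Real.exp (-(Real.exp (-t / β) * c')))) t
      = ∫⁻ t in Set.univ, ENNReal.ofReal ((1 / β) * Real.exp (-t / β - C * Real.exp (-t / β))) := by
        rw [Measure.restrict_univ]; exact lintegral_congr fun t => hcomb t
    _ = ENNReal.ofReal (∫ u in Ioi (0:ℝ), Real.exp (-(C * u))) := by
        rw [gm_core hβ hC0 MeasurableSet.univ (gm_image_univ hβ)
          (gm_exp_integrableOn_Ioi hC0 _)]
    _ = ENNReal.ofReal (Real.exp (s i / β) / ∑ j, Real.exp (s j / β)) := by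
        rw [gm_integral_exp_neg_mul_Ioi hC0]
        congr 1
        rw [mul_zero, neg_zero, Real.exp_zero]
        have hCeq : C = (∑ j, Real.exp (s j / β)) / Real.exp (s i / β) := by
          rw [hCdef, hc', Fin.sum_univ_succAbove (fun j => Real.exp (s j / β)) i,
            add_div, div_self (Real.exp_pos _).ne', Finset.sum_div]
          congr 1
          refine Finset.sum_congr rfl fun j _ => ?_
          rw [← Real.exp_sub]
          congr 1
          ring
        rw [hCeq, one_div_div]
end

section
/- If for two discrete distributions P and Q over sequences of length K, the per-step conditional likelihood-ratio moments satisfy E_{y_n ∼ Q(·|y^{(n−1)})}[(P(y_n|y^{(n−1)})/Q(y_n|y^{(n−1)}))^α] ≤ e^{(α−1)ε_n(y^{(n−1)})} for adaptively chosen ε_n with Σ_{n=1}^K ε_n ≤ ε_max almost surely, then E_{y^{(K)}∼Q}[(P(y^{(K)})/Q(y^{(K)}))^α] ≤ e^{(α−1)ε_max}. -/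
/-!
Discounting the step-`n` moment by `e^{-(α-1) ε_n}` turns each conditional moment into a
sub-probability kernel in `y_n`. A sum over paths of a product of sub-probability kernels is at
most `1` (sum out the last coordinate, then induct), and along every path the budget
`∑ ε_n ≤ ε_max` bounds `Q (P/Q)^α` by `e^{(α-1) ε_max}` times that product.
-/

open Finset

/-- The length-`n` prefix of a sequence `y : Fin K → Y`, for `n : Fin K`. -/
def prefixOf {K : ℕ} {Y : Type*} (y : Fin K → Y) (n : Fin K) : Fin n → Y :=
  fun i => y (Fin.castLE n.isLt.le i)

section

variable {Y : Type*}

lemma prefixOf_snoc_castSucc {K : ℕ} (y : Fin K → Y) (z : Y) (n : Fin K) :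
    prefixOf (Fin.snoc y z : Fin (K + 1) → Y) n.castSucc = prefixOf y n := by
  funext i
  exact Fin.snoc_castSucc (α := fun _ => Y) z y (Fin.castLE n.isLt.le i)

lemma prefixOf_snoc_last {K : ℕ} (y : Fin K → Y) (z : Y) :
    prefixOf (Fin.snoc y z : Fin (K + 1) → Y) (Fin.last K) = y := by
  funext i
  exact Fin.snoc_castSucc (α := fun _ => Y) z y i

lemma prod_prefixOf_snoc {M : Type*} [CommMonoid M] {K : ℕ}
    (f : (n : Fin (K + 1)) → (Fin n → Y) → Y → M) (y : Fin K → Y) (z : Y) :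
    ∏ n, f n (prefixOf (Fin.snoc y z : Fin (K + 1) → Y) n) ((Fin.snoc y z : Fin (K + 1) → Y) n) =
      (∏ n : Fin K, f n.castSucc (prefixOf y n) (y n)) * f (Fin.last K) y z := by
  simp only [Fin.prod_univ_castSucc, prefixOf_snoc_castSucc, prefixOf_snoc_last,
    Fin.snoc_castSucc, Fin.snoc_last]

lemma sum_fin_succ_fun_eq_sum_sum_snoc {M : Type*} [AddCommMonoid M] [Fintype Y] {K : ℕ}
    (g : (Fin (K + 1) → Y) → M) :
    ∑ y, g y = ∑ y : Fin K → Y, ∑ z, g (Fin.snoc y z) := by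
  rw [← (Fin.snocEquiv fun _ => Y).sum_comp, Fintype.sum_prod_type, sum_comm]
  rfl

theorem sum_prod_prefixOf_le_one [Fintype Y] {K : ℕ}
    (f : (n : Fin K) → (Fin n → Y) → Y → ℝ) (hf_nonneg : ∀ n hist z, 0 ≤ f n hist z)
    (hf_sum : ∀ n hist, ∑ z, f n hist z ≤ 1) :
    ∑ y : Fin K → Y, ∏ n, f n (prefixOf y n) (y n) ≤ 1 := by
  induction K with
  | zero => simp
  | succ K ih =>
    calc ∑ y : Fin (K + 1) → Y, ∏ n, f n (prefixOf y n) (y n)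
        = ∑ y : Fin K → Y, (∏ n : Fin K, f n.castSucc (prefixOf y n) (y n)) *
            ∑ z, f (Fin.last K) y z := by
          simp only [sum_fin_succ_fun_eq_sum_sum_snoc, prod_prefixOf_snoc, mul_sum]
      _ ≤ ∑ y : Fin K → Y, ∏ n : Fin K, f n.castSucc (prefixOf y n) (y n) := by
          gcongr with y
          exact mul_le_of_le_one_right (prod_nonneg fun n _ => hf_nonneg ..) (hf_sum ..)
      _ ≤ 1 := ih _ (fun n => hf_nonneg n.castSucc) (fun n => hf_sum n.castSucc)

lemma prod_mul_div_rpow {ι : Type*} (s : Finset ι) {a b : ι → ℝ} (ha : ∀ i ∈ s, 0 ≤ a i)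
    (hb : ∀ i ∈ s, 0 ≤ b i) (α : ℝ) :
    (∏ i ∈ s, b i) * ((∏ i ∈ s, a i) / ∏ i ∈ s, b i) ^ α =
      ∏ i ∈ s, b i * (a i / b i) ^ α := by
  rw [prod_mul_distrib, ← prod_div_distrib,
    Real.finsetProd_rpow s _ (fun i hi => div_nonneg (ha i hi) (hb i hi))]

lemma prod_le_exp_mul_prod_mul_exp_neg {ι : Type*} (s : Finset ι) {x c : ι → ℝ}
    (hx : ∀ i ∈ s, 0 ≤ x i) {κ C : ℝ} (hκ : 0 ≤ κ) (hc : ∑ i ∈ s, c i ≤ C) :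
    ∏ i ∈ s, x i ≤ Real.exp (κ * C) * ∏ i ∈ s, x i * Real.exp (-(κ * c i)) := by
  have h_one : 1 ≤ Real.exp (κ * C) * Real.exp (-(κ * ∑ i ∈ s, c i)) := by
    rw [← Real.exp_add]
    exact Real.one_le_exp (by nlinarith)
  calc ∏ i ∈ s, x i
      ≤ Real.exp (κ * C) * Real.exp (-(κ * ∑ i ∈ s, c i)) * ∏ i ∈ s, x i :=
        le_mul_of_one_le_left (prod_nonneg hx) h_one
    _ = Real.exp (κ * C) * ∏ i ∈ s, x i * Real.exp (-(κ * c i)) := by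
        rw [prod_mul_distrib, ← Real.exp_sum, sum_neg_distrib, mul_sum]
        ring

end

theorem adaptive_moment_bound_general {K : ℕ} {Y : Type*} [Fintype Y]
    (p q : (n : Fin K) → (Fin n → Y) → Y → ℝ)
    (hp_nonneg : ∀ n hist y, 0 ≤ p n hist y) (hq_nonneg : ∀ n hist y, 0 ≤ q n hist y)
    (α : ℝ) (hα : 1 < α)
    (ε : (n : Fin K) → (Fin n → Y) → ℝ) (εmax : ℝ)
    (hmoment : ∀ n hist,
      ∑ y, q n hist y * (p n hist y / q n hist y) ^ α ≤
        Real.exp ((α - 1) * ε n hist))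
    (hbudget : ∀ y : Fin K → Y, ∑ n, ε n (prefixOf y n) ≤ εmax) :
    ∑ y : Fin K → Y,
        (∏ n, q n (prefixOf y n) (y n)) *
          ((∏ n, p n (prefixOf y n) (y n)) / ∏ n, q n (prefixOf y n) (y n)) ^ α ≤
      Real.exp ((α - 1) * εmax) := by
  have hmoment_nonneg : ∀ n hist z, 0 ≤ q n hist z * (p n hist z / q n hist z) ^ α :=
    fun n hist z => mul_nonneg (hq_nonneg ..)
      (Real.rpow_nonneg (div_nonneg (hp_nonneg ..) (hq_nonneg ..)) _)
  set f : (n : Fin K) → (Fin n → Y) → Y → ℝ := fun n hist z =>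
    q n hist z * (p n hist z / q n hist z) ^ α * Real.exp (-((α - 1) * ε n hist))
  have hf_nonneg : ∀ n hist z, 0 ≤ f n hist z := fun n hist z =>
    mul_nonneg (hmoment_nonneg ..) (Real.exp_nonneg _)
  have hf_sum : ∀ n hist, ∑ z, f n hist z ≤ 1 := fun n hist =>
    calc ∑ z, f n hist z
        = (∑ z, q n hist z * (p n hist z / q n hist z) ^ α) *
            Real.exp (-((α - 1) * ε n hist)) := (sum_mul ..).symm
      _ ≤ Real.exp ((α - 1) * ε n hist) * Real.exp (-((α - 1) * ε n hist)) := by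
          gcongr
          exact hmoment n hist
      _ = 1 := by rw [← Real.exp_add, add_neg_cancel, Real.exp_zero]
  have hpath : ∀ y : Fin K → Y,
      (∏ n, q n (prefixOf y n) (y n)) *
          ((∏ n, p n (prefixOf y n) (y n)) / ∏ n, q n (prefixOf y n) (y n)) ^ α ≤
        Real.exp ((α - 1) * εmax) * ∏ n, f n (prefixOf y n) (y n) := fun y => by
    rw [prod_mul_div_rpow _ (fun n _ => hp_nonneg ..) (fun n _ => hq_nonneg ..)]
    exact prod_le_exp_mul_prod_mul_exp_neg _
      (fun n _ => hmoment_nonneg ..) (by linarith) (hbudget y)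
  calc _ ≤ ∑ y : Fin K → Y, Real.exp ((α - 1) * εmax) * ∏ n, f n (prefixOf y n) (y n) :=
        sum_le_sum fun y _ => hpath y
    _ = Real.exp ((α - 1) * εmax) * ∑ y : Fin K → Y, ∏ n, f n (prefixOf y n) (y n) :=
        (mul_sum ..).symm
    _ ≤ Real.exp ((α - 1) * εmax) * 1 := by
        gcongr
        exact sum_prod_prefixOf_le_one f hf_nonneg hf_sum
    _ = Real.exp ((α - 1) * εmax) := mul_one _

/-- Core inequality behind fully adaptive RDP privacy filters: if two discrete
distributions over sequences of length `K`, given by conditional probability mass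
functions `p` and `q`, have per-step conditional likelihood-ratio moments bounded as
`E_{y_n ∼ q(·|y^{(n-1)})}[(p(y_n|y^{(n-1)})/q(y_n|y^{(n-1)}))^α] ≤ e^{(α-1) ε_n(y^{(n-1)})}`
for adaptively chosen `ε_n` with `∑_n ε_n ≤ ε_max` along every path, then the full
likelihood-ratio moment satisfies
`E_{y ∼ Q}[(P(y)/Q(y))^α] ≤ e^{(α-1) ε_max}`. -/
theorem adaptive_moment_bound {K : ℕ} {Y : Type*} [Fintype Y] [Nonempty Y]
    (p q : (n : Fin K) → (Fin n → Y) → Y → ℝ)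
    (hp_nonneg : ∀ n hist y, 0 ≤ p n hist y) (hq_nonneg : ∀ n hist y, 0 ≤ q n hist y)
    (hp_sum : ∀ n hist, ∑ y, p n hist y = 1) (hq_sum : ∀ n hist, ∑ y, q n hist y = 1)
    (α : ℝ) (hα : 1 < α)
    (ε : (n : Fin K) → (Fin n → Y) → ℝ) (εmax : ℝ)
    (hmoment : ∀ n hist,
      ∑ y, q n hist y * (p n hist y / q n hist y) ^ α ≤
        Real.exp ((α - 1) * ε n hist))
    (hbudget : ∀ y : Fin K → Y, ∑ n, ε n (prefixOf y n) ≤ εmax) :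
    ∑ y : Fin K → Y,
        (∏ n, q n (prefixOf y n) (y n)) *
          ((∏ n, p n (prefixOf y n) (y n)) / ∏ n, q n (prefixOf y n) (y n)) ^ α ≤
      Real.exp ((α - 1) * εmax) :=
  adaptive_moment_bound_general p q hp_nonneg hq_nonneg α hα ε εmax hmoment hbudget
end

section
/- If the top-k and (k+1)-th largest counts of an integer-valued histogram H with ℓ∞-sensitivity 1 per bin and at most 2 bins changed between neighbors satisfy H(k) − H(k+1) > 2, then the set of top-k indices of H is identical to the set of top-k indices of H' for every neighboring histogram H'. -/
theorem topk_invariant_of_gap_general {D : ℕ} (H H' : Fin D → ℤ)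
    (S : Finset (Fin D))
    (hgap : ∀ i ∈ S, ∀ j ∉ S, H j + 3 ≤ H i)
    (hbin : ∀ j, |H j - H' j| ≤ 1) :
    ∀ i ∈ S, ∀ j ∉ S, H' j < H' i := by
  intro i hi j hj
  have hi' := abs_le.mp (hbin i)
  have hj' := abs_le.mp (hbin j)
  linarith [hgap i hi j hj]

/-- If `S` is the top-`k` index set of the integer histogram `H` with a gap greater
than `2` between the `k`-th and `(k+1)`-th largest counts (i.e. every count inside `S`
exceeds every count outside `S` by at least `3`), then for every neighbouring histogram
`H'` (each bin changes by at most `1` and at most two bins change), `S` is still the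
top-`k` index set of `H'`: every count of `H'` inside `S` strictly exceeds every count
of `H'` outside `S`. -/
theorem topk_invariant_of_gap {D k : ℕ} (H H' : Fin D → ℤ)
    (S : Finset (Fin D)) (hS : S.card = k)
    (hgap : ∀ i ∈ S, ∀ j ∉ S, H j + 3 ≤ H i)
    (hbin : ∀ j, |H j - H' j| ≤ 1)
    (hdiff : (Finset.univ.filter fun j => H j ≠ H' j).card ≤ 2) :
    ∀ i ∈ S, ∀ j ∉ S, H' j < H' i :=
  topk_invariant_of_gap_general H H' S hgap hbin
end
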